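/- arXiv:1401.6443 — 2 statements merged into one kernel-verified Lean document; each statement's English description precedes it below -/
import Mathlib

section
/- For α ∈ (0,1) and β = 1 − 2α, the function U = h^{2α}, with h(t,z) = r^{1/2} cos(θ/2), satisfies ΔU + β U_z / z = 0 on ℝ² minus the closed negative t-axis (away from z = 0). Equivalently, div(|z|^β ∇U) = 0 there. -/
noncomputable def hh (t z : ℝ) : ℝ :=
  Real.sqrt (Real.sqrt (t ^ 2 + z ^ 2)) * Real.cos (Complex.arg (t + z * Complex.I) / 2)

/-- `U = h^{2α}` (which vanishes on the closed negative `t`-axis). -/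
noncomputable def UU (α t z : ℝ) : ℝ := hh t z ^ (2 * α)

noncomputable def dT (f : ℝ → ℝ → ℝ) (t z : ℝ) : ℝ := deriv (fun s => f s z) t
noncomputable def dZ (f : ℝ → ℝ → ℝ) (t z : ℝ) : ℝ := deriv (fun s => f t s) z

/-!
With `r = √(t² + z²)` and `ρ = h² = (r + t) / 2` we have `U = ρ ^ α`, `ρ_t = ρ / r`, `ρ_z = z / (2r)`
and `Δρ = 1 / (2r)`; since `z² = r² - t² = 4ρ(r - ρ)` also `|∇ρ|² = ρ / r`. Hence
`ΔU + β U_z / z = α ρ^(α-2) ((α - 1)|∇ρ|² + ρ Δρ + β ρ ρ_z / z) = α ρ^(α-1) / r · (α - 1/2 + β/2) = 0`.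
-/

open Filter Topology

lemma deriv_deriv_rpow_const {f f' : ℝ → ℝ} {x f'' : ℝ} (a : ℝ)
    (hf : ∀ᶠ y in 𝓝 x, HasDerivAt f (f' y) y) (hf' : HasDerivAt f' f'' x) (hx : 0 < f x) :
    deriv (deriv fun y => f y ^ a) x = a * f x ^ (a - 2) * ((a - 1) * f' x ^ 2 + f x * f'') := by
  have hpos : ∀ᶠ y in 𝓝 x, 0 < f y := hf.self_of_nhds.continuousAt.eventually (lt_mem_nhds hx)
  have hderiv : deriv (fun y => f y ^ a) =ᶠ[𝓝 x] fun y => a * f y ^ (a - 1) * f' y := by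
    filter_upwards [hf, hpos] with y hy hy0
    rw [(hy.rpow_const (Or.inl hy0.ne')).deriv]
    ring
  have h2 : HasDerivAt (fun y => a * f y ^ (a - 1) * f' y)
      (a * (f' x * (a - 1) * f x ^ (a - 1 - 1)) * f' x + a * f x ^ (a - 1) * f'') x :=
    ((hf.self_of_nhds.rpow_const (p := a - 1) (Or.inl hx.ne')).const_mul a).mul hf'
  rw [hderiv.deriv_eq, h2.deriv, show a - 1 - 1 = a - 2 by ring, show a - 1 = a - 2 + 1 by ring,
    Real.rpow_add_one hx.ne']
  ring

lemma hasDerivAt_sqrt_sq_add (c t : ℝ) (h : t ^ 2 + c ≠ 0) :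
    HasDerivAt (fun s => √(s ^ 2 + c)) (t / √(t ^ 2 + c)) t := by
  convert ((hasDerivAt_pow 2 t).add_const c).sqrt h using 1
  field_simp
  ring

lemma hasDerivAt_sqrt_add_sq (c z : ℝ) (h : c + z ^ 2 ≠ 0) :
    HasDerivAt (fun s => √(c + s ^ 2)) (z / √(c + z ^ 2)) z := by
  convert ((hasDerivAt_pow 2 z).const_add c).sqrt h using 1
  field_simp
  ring

noncomputable def hhSq (t z : ℝ) : ℝ := (√(t ^ 2 + z ^ 2) + t) / 2

lemma hhSq_pos (t : ℝ) {z : ℝ} (hz : z ≠ 0) : 0 < hhSq t z := by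
  have : |t| < √(t ^ 2 + z ^ 2) := by
    rw [← Real.sqrt_sq_eq_abs]
    exact Real.sqrt_lt_sqrt (sq_nonneg t) (lt_add_of_pos_right _ (by positivity))
  unfold hhSq
  linarith [neg_abs_le t]

lemma hhSq_nonneg (t z : ℝ) : 0 ≤ hhSq t z := by
  have : |t| ≤ √(t ^ 2 + z ^ 2) := by
    rw [← Real.sqrt_sq_eq_abs]
    exact Real.sqrt_le_sqrt (le_add_of_nonneg_right (sq_nonneg z))
  unfold hhSq
  linarith [neg_abs_le t]

lemma hh_eq_sqrt_hhSq (t z : ℝ) : hh t z = √(hhSq t z) := by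
  rcases eq_or_ne (t + z * Complex.I) 0 with h0 | h0
  · obtain ⟨rfl, rfl⟩ : t = 0 ∧ z = 0 := by simpa [Complex.ext_iff] using h0
    simp [hh, hhSq]
  have hnorm : ‖(t + z * Complex.I : ℂ)‖ = √(t ^ 2 + z ^ 2) := by
    rw [Complex.norm_add_mul_I]
  have hr : 0 < √(t ^ 2 + z ^ 2) := hnorm ▸ norm_pos_iff.2 h0
  rw [hh, Real.cos_half (by linarith [Complex.neg_pi_lt_arg (t + z * Complex.I)])
    (Complex.arg_le_pi _), Complex.cos_arg h0, hnorm, ← Real.sqrt_mul hr.le, hhSq]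
  congr 1
  simp only [Complex.add_re, Complex.ofReal_re, Complex.mul_re, Complex.ofReal_im, Complex.I_re,
    Complex.I_im]
  field_simp
  ring

lemma UU_eq_hhSq_rpow (α : ℝ) : UU α = fun t z => hhSq t z ^ α := by
  ext t z
  rw [UU, hh_eq_sqrt_hhSq, Real.sqrt_eq_rpow, ← Real.rpow_mul (hhSq_nonneg t z)]
  ring_nf

section Derivatives

variable {t z : ℝ} (h : t ^ 2 + z ^ 2 ≠ 0)
include h

lemma hasDerivAt_hhSq_left :
    HasDerivAt (fun s => hhSq s z) (hhSq t z / √(t ^ 2 + z ^ 2)) t := by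
  have hr : √(t ^ 2 + z ^ 2) ≠ 0 := by positivity
  refine (((hasDerivAt_sqrt_sq_add (z ^ 2) t h).add (hasDerivAt_id t)).div_const 2).congr_deriv ?_
  rw [hhSq]
  field_simp
  ring

lemma hasDerivAt_hhSq_right :
    HasDerivAt (fun s => hhSq t s) (z / (2 * √(t ^ 2 + z ^ 2))) z := by
  refine (((hasDerivAt_sqrt_add_sq (t ^ 2) z h).add_const t).div_const 2).congr_deriv ?_
  ring

lemma hasDerivAt_hhSq_div_sqrt_left :
    HasDerivAt (fun s => hhSq s z / √(s ^ 2 + z ^ 2))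
      (z ^ 2 / (2 * √(t ^ 2 + z ^ 2) ^ 3)) t := by
  have hr : √(t ^ 2 + z ^ 2) ≠ 0 := by positivity
  have hr2 : √(t ^ 2 + z ^ 2) ^ 2 = t ^ 2 + z ^ 2 := Real.sq_sqrt (by positivity)
  refine ((hasDerivAt_hhSq_left h).div (hasDerivAt_sqrt_sq_add (z ^ 2) t h) hr).congr_deriv ?_
  rw [hhSq]
  field_simp
  linear_combination hr2

lemma hasDerivAt_div_two_sqrt_right :
    HasDerivAt (fun s => s / (2 * √(t ^ 2 + s ^ 2)))
      (t ^ 2 / (2 * √(t ^ 2 + z ^ 2) ^ 3)) z := by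
  have hr : √(t ^ 2 + z ^ 2) ≠ 0 := by positivity
  have hr2 : √(t ^ 2 + z ^ 2) ^ 2 = t ^ 2 + z ^ 2 := Real.sq_sqrt (by positivity)
  refine ((hasDerivAt_id z).div ((hasDerivAt_sqrt_add_sq (t ^ 2) z h).const_mul 2)
    (by positivity)).congr_deriv ?_
  rw [id]
  field_simp
  linear_combination hr2

end Derivatives

section PartialDerivatives

variable (α : ℝ) {t z : ℝ} (hz : z ≠ 0)
include hz

lemma dZ_UU :
    dZ (UU α) t z = α * hhSq t z ^ (α - 1) * (z / (2 * √(t ^ 2 + z ^ 2))) := by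
  rw [dZ, UU_eq_hhSq_rpow,
    ((hasDerivAt_hhSq_right (by positivity)).rpow_const (Or.inl (hhSq_pos t hz).ne')).deriv]
  ring

lemma dT_dT_UU :
    dT (dT (UU α)) t z = α * hhSq t z ^ (α - 2) * ((α - 1) * (hhSq t z / √(t ^ 2 + z ^ 2)) ^ 2
      + hhSq t z * (z ^ 2 / (2 * √(t ^ 2 + z ^ 2) ^ 3))) := by
  have hs : ∀ s, s ^ 2 + z ^ 2 ≠ 0 := fun s => by positivity
  simp only [dT, UU_eq_hhSq_rpow]
  exact deriv_deriv_rpow_const α (Eventually.of_forall fun s => hasDerivAt_hhSq_left (hs s))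
    (hasDerivAt_hhSq_div_sqrt_left (hs t)) (hhSq_pos t hz)

lemma dZ_dZ_UU :
    dZ (dZ (UU α)) t z = α * hhSq t z ^ (α - 2) * ((α - 1) * (z / (2 * √(t ^ 2 + z ^ 2))) ^ 2
      + hhSq t z * (t ^ 2 / (2 * √(t ^ 2 + z ^ 2) ^ 3))) := by
  have hs : ∀ᶠ s in 𝓝 z, HasDerivAt (fun u => hhSq t u) (s / (2 * √(t ^ 2 + s ^ 2))) s := by
    filter_upwards [eventually_ne_nhds hz] with s hs
    exact hasDerivAt_hhSq_right (by positivity)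
  simp only [dZ, UU_eq_hhSq_rpow]
  exact deriv_deriv_rpow_const α hs (hasDerivAt_div_two_sqrt_right (by positivity)) (hhSq_pos t hz)

end PartialDerivatives

theorem stmt_2_general (α β : ℝ) (hβ : β = 1 - 2 * α)
    (t z : ℝ) (hz : z ≠ 0) :
    dT (dT (UU α)) t z + dZ (dZ (UU α)) t z + β * dZ (UU α) t z / z = 0 := by
  rw [dT_dT_UU α hz, dZ_dZ_UU α hz, dZ_UU α hz, hβ,
    show α - 1 = α - 2 + 1 by ring, Real.rpow_add_one (hhSq_pos t hz).ne', hhSq]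
  set r := √(t ^ 2 + z ^ 2)
  have hr : r ≠ 0 := by positivity
  have hr2 : r ^ 2 = t ^ 2 + z ^ 2 := Real.sq_sqrt (by positivity)
  field_simp
  linear_combination (-α * ((r + t) / 2) ^ (α - 2) * (t + α * r)) * hr2

/-- `ΔU + β U_z/z = 0` off the closed negative `t`-axis, away from `z = 0`. -/
theorem stmt_2 (α β : ℝ) (hα : α ∈ Set.Ioo (0 : ℝ) 1) (hβ : β = 1 - 2 * α)
    (t z : ℝ) (hz : z ≠ 0) :
    dT (dT (UU α)) t z + dZ (dZ (UU α)) t z + β * dZ (UU α) t z / z = 0 :=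
  stmt_2_general α β hβ t z hz
end

section
/- U is globally Hölder continuous of exponent α on ℝ²: there is C > 0 with |U(t₁,z₁) − U(t₂,z₂)| ≤ C |(t₁,z₁) − (t₂,z₂)|^α for all points of ℝ². -/
open Complex

theorem Real.abs_rpow_sub_rpow_le {a b p : ℝ} (ha : 0 ≤ a) (hb : 0 ≤ b) (hp : 0 ≤ p)
    (hp1 : p ≤ 1) : |a ^ p - b ^ p| ≤ |a - b| ^ p := by
  wlog hba : b ≤ a generalizing a b
  · rw [abs_sub_comm, abs_sub_comm a]
    exact this hb ha (le_of_not_ge hba)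
  have hsub : a ^ p ≤ (a - b) ^ p + b ^ p := by
    simpa using Real.rpow_add_le_add_rpow (sub_nonneg.2 hba) hb hp hp1
  have hmono : b ^ p ≤ a ^ p := Real.rpow_le_rpow hb hba hp
  rw [abs_of_nonneg (sub_nonneg.2 hmono), abs_of_nonneg (sub_nonneg.2 hba)]
  linarith

theorem Complex.abs_norm_add_re_sub_le (w₁ w₂ : ℂ) :
    |(‖w₁‖ + w₁.re) - (‖w₂‖ + w₂.re)| ≤ 2 * ‖w₁ - w₂‖ := by
  have hnorm := abs_norm_sub_norm_le w₁ w₂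
  have hre : |w₁.re - w₂.re| ≤ ‖w₁ - w₂‖ := by
    simpa using abs_re_le_norm (w₁ - w₂)
  calc |(‖w₁‖ + w₁.re) - (‖w₂‖ + w₂.re)| = |(‖w₁‖ - ‖w₂‖) + (w₁.re - w₂.re)| := by ring_nf
    _ ≤ |‖w₁‖ - ‖w₂‖| + |w₁.re - w₂.re| := abs_add_le _ _
    _ ≤ 2 * ‖w₁ - w₂‖ := by linarith

theorem hh_nonneg (t z : ℝ) : 0 ≤ hh t z := by
  refine mul_nonneg (Real.sqrt_nonneg _) (Real.cos_nonneg_of_mem_Icc ⟨?_, ?_⟩)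
  · linarith [neg_pi_lt_arg (t + z * I), Real.pi_pos]
  · linarith [arg_le_pi (t + z * I), Real.pi_pos]

theorem hh_sq (t z : ℝ) : hh t z ^ 2 = (‖(t + z * I : ℂ)‖ + t) / 2 := by
  set w : ℂ := t + z * I
  rcases eq_or_ne w 0 with hw | hw
  · have ht : t = 0 := by simpa [w] using congrArg re hw
    have hz : z = 0 := by simpa [w] using congrArg im hw
    simp [hh, w, ht, hz]
  have hcos : Real.cos (arg w) = t / ‖w‖ := by simp [cos_arg hw, w]
  have hhalf : Real.cos (arg w / 2) ^ 2 = 1 / 2 + Real.cos (arg w) / 2 := by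
    rw [Real.cos_sq, mul_div_cancel₀ _ two_ne_zero]
  have hpos : 0 < ‖w‖ := norm_pos_iff.2 hw
  rw [hh, mul_pow, Real.sq_sqrt (Real.sqrt_nonneg _), ← norm_add_mul_I, hhalf, hcos]
  field_simp
  ring

theorem abs_hh_sq_sub_le (t₁ z₁ t₂ z₂ : ℝ) :
    |hh t₁ z₁ ^ 2 - hh t₂ z₂ ^ 2| ≤ √((t₁ - t₂) ^ 2 + (z₁ - z₂) ^ 2) := by
  have h := abs_norm_add_re_sub_le (t₁ + z₁ * I) (t₂ + z₂ * I)
  have hdiff : (t₁ + z₁ * I : ℂ) - (t₂ + z₂ * I) = ((t₁ - t₂ : ℝ) + (z₁ - z₂ : ℝ) * I) := by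
    push_cast
    ring
  rw [hdiff, norm_add_mul_I (t₁ - t₂)] at h
  simp only [add_re, ofReal_re, mul_re, I_re, mul_zero, ofReal_im, I_im, mul_one, sub_self,
    add_zero] at h
  rw [hh_sq, hh_sq, ← sub_div, abs_div, abs_two, div_le_iff₀ two_pos]
  linarith

theorem UU_eq_hh_sq_rpow (α t z : ℝ) : UU α t z = (hh t z ^ 2) ^ α := by
  rw [UU, ← Real.rpow_natCast_mul (hh_nonneg t z)]
  norm_num

/-- `U` is globally Hölder continuous of exponent `α` on `ℝ²`. -/
theorem stmt_7 (α : ℝ) (hα : α ∈ Set.Ioo (0 : ℝ) 1) :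
    ∃ C > 0, ∀ t₁ z₁ t₂ z₂ : ℝ,
      |UU α t₁ z₁ - UU α t₂ z₂|
        ≤ C * Real.sqrt ((t₁ - t₂) ^ 2 + (z₁ - z₂) ^ 2) ^ α := by
  refine ⟨1, one_pos, fun t₁ z₁ t₂ z₂ => ?_⟩
  rw [one_mul, UU_eq_hh_sq_rpow, UU_eq_hh_sq_rpow]
  calc |(hh t₁ z₁ ^ 2) ^ α - (hh t₂ z₂ ^ 2) ^ α|
      ≤ |hh t₁ z₁ ^ 2 - hh t₂ z₂ ^ 2| ^ α :=
        Real.abs_rpow_sub_rpow_le (sq_nonneg _) (sq_nonneg _) hα.1.le hα.2.le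
    _ ≤ √((t₁ - t₂) ^ 2 + (z₁ - z₂) ^ 2) ^ α :=
        Real.rpow_le_rpow (abs_nonneg _) (abs_hh_sq_sub_le t₁ z₁ t₂ z₂) hα.1.le
end
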